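/- Assume a_X > b_X > 0 and a_Y + b_Y > 0, and let T_I = max{0, (b_Y − a_Y)/(2·ln(a_X/b_X))}, T_B = b_Y/ln(a_X/b_X), and x₁ = min{1/2, (b_Y − T_y·ln(a_X/b_X))/(a_Y + b_Y)}. If T_I < T_y < T_B, then there exists a unique x_L ∈ (0, x₁) such that L(x_L) = b_X/(a_X + b_X), and T_X(x) ≤ T_X(x_L) for every x ∈ (0, 1/2). -/

import Mathlib

open Real Filter Set Topology

/-- QRE response of the second player. -/
noncomputable def qreY (aY bY Ty : ℝ) (x : ℝ) : ℝ :=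
  (1 + Real.exp ((bY - (aY + bY) * x) / Ty))⁻¹

/-- QRE temperature curve for the first player. -/
noncomputable def qreTX (aX bX aY bY Ty : ℝ) (x : ℝ) : ℝ :=
  (bX - (aX + bX) * qreY aY bY Ty x) / Real.log (1 / x - 1)

/-- The auxiliary function L(x) = y(x) + x(1-x) ln(1/x-1) y'(x). -/
noncomputable def qreL (aY bY Ty : ℝ) (x : ℝ) : ℝ :=
  qreY aY bY Ty x + x * (1 - x) * Real.log (1 / x - 1) * deriv (qreY aY bY Ty) x

/-!
`T_X'(x) = (b_X − (a_X + b_X) L(x)) / (x (1 − x) ln²(1/x − 1))`, so `T_X` rises while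
`L < b_X/(a_X + b_X)` and falls once `L` exceeds it. The threshold equals `y(x₁)`. On `(0, x₁]`, where
both `x` and `y(x)` stay below `1/2`, `L` is strictly increasing; it starts from `y(0) < y(x₁)` and
ends above `y(x₁)` because `L > y` on `(0, 1/2)`. Beyond `x₁` the inequality `L > y ≥ y(x₁)`
persists, so `L` crosses the threshold exactly once, at the maximiser `x_L` of `T_X`.
-/

lemma hasDerivAt_log_one_div_sub_one {x : ℝ} (hx : x ∈ Ioo 0 1) :
    HasDerivAt (fun x => log (1 / x - 1)) (-(x * (1 - x))⁻¹) x := by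
  obtain ⟨hx0, hx1⟩ := hx
  have hpos : 0 < 1 / x - 1 := by rw [sub_pos, lt_div_iff₀ hx0]; linarith
  have hinner : HasDerivAt (fun x : ℝ => 1 / x - 1) (-(x ^ 2)⁻¹) x := by
    simpa [one_div] using (hasDerivAt_inv hx0.ne').sub_const 1
  refine (hinner.log hpos.ne').congr_deriv ?_
  have : 1 - x ≠ 0 := by linarith
  rw [div_sub_one hx0.ne']
  field_simp

lemma log_one_div_sub_one_pos {x : ℝ} (hx0 : 0 < x) (hx : x < 1 / 2) : 0 < log (1 / x - 1) := by
  apply log_pos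
  rw [lt_sub_iff_add_lt, lt_div_iff₀ hx0]
  linarith

lemma tendsto_mul_one_sub_mul_log_one_div_sub_one :
    Tendsto (fun x => x * (1 - x) * log (1 / x - 1)) (𝓝[>] 0) (𝓝 0) := by
  have hcont : ContinuousAt (fun x : ℝ => x * (1 - x) * log (1 - x) - (1 - x) * (x * log x)) 0 := by
    have := continuous_mul_log.continuousAt (x := 0)
    have := (continuousAt_log (x := 1 - 0) (by norm_num)).comp (f := fun x : ℝ => 1 - x) (by fun_prop)
    fun_prop
  have hlim := hcont.tendsto.mono_left (nhdsWithin_le_nhds (s := Ioi 0))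
  simp only [mul_zero, zero_mul, sub_zero, log_one] at hlim
  refine hlim.congr' ?_
  filter_upwards [Ioo_mem_nhdsGT (zero_lt_one' ℝ)] with x hx
  have : 1 - x ≠ 0 := by linarith [hx.2]
  rw [div_sub_one hx.1.ne', log_div this hx.1.ne']
  ring

section QreY

variable {aY bY Ty : ℝ}

lemma qreY_eq_sigmoid (aY bY Ty x : ℝ) :
    qreY aY bY Ty x = sigmoid (((aY + bY) * x - bY) / Ty) := by
  rw [qreY, sigmoid_def, ← neg_div, neg_sub]

lemma continuous_qreY (aY bY Ty : ℝ) : Continuous (qreY aY bY Ty) := by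
  simp_rw [funext (qreY_eq_sigmoid aY bY Ty)]
  exact continuous_sigmoid.comp (by fun_prop)

lemma hasDerivAt_qreY (aY bY Ty x : ℝ) :
    HasDerivAt (qreY aY bY Ty)
      ((aY + bY) / Ty * (qreY aY bY Ty x * (1 - qreY aY bY Ty x))) x := by
  have hlin : HasDerivAt (fun x => ((aY + bY) * x - bY) / Ty) ((aY + bY) / Ty) x := by
    simpa using (((hasDerivAt_id x).const_mul (aY + bY)).sub_const bY).div_const Ty
  simp_rw [funext (qreY_eq_sigmoid aY bY Ty)]
  exact ((hasDerivAt_sigmoid _).comp x hlin).congr_deriv (mul_comm _ _)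

lemma qreY_mul_one_sub_pos (aY bY Ty x : ℝ) :
    0 < qreY aY bY Ty x * (1 - qreY aY bY Ty x) := by
  rw [qreY_eq_sigmoid]
  exact mul_pos (sigmoid_pos _) (sub_pos.2 (sigmoid_lt_one _))

lemma qreY_strictMono (hc : 0 < aY + bY) (hTy : 0 < Ty) : StrictMono (qreY aY bY Ty) := by
  intro x x' h
  simp only [qreY_eq_sigmoid]
  exact sigmoid_lt (div_lt_div_of_pos_right (by gcongr) hTy)

lemma qreY_sub_mul_div (hc : aY + bY ≠ 0) (hTy : Ty ≠ 0) (k : ℝ) :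
    qreY aY bY Ty ((bY - Ty * k) / (aY + bY)) = (1 + exp k)⁻¹ := by
  rw [qreY, mul_div_cancel₀ _ hc, sub_sub_cancel, mul_div_cancel_left₀ _ hTy]

lemma qreL_eq (aY bY Ty x : ℝ) :
    qreL aY bY Ty x = qreY aY bY Ty x + x * (1 - x) * log (1 / x - 1) *
      ((aY + bY) / Ty * (qreY aY bY Ty x * (1 - qreY aY bY Ty x))) := by
  rw [qreL, (hasDerivAt_qreY aY bY Ty x).deriv]

end QreY

section QreL

variable {aY bY Ty x x₁ xL : ℝ}

lemma hasDerivAt_qreL (hx : x ∈ Ioo 0 1) :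
    HasDerivAt (qreL aY bY Ty)
      (log (1 / x - 1) * ((aY + bY) / Ty * (qreY aY bY Ty x * (1 - qreY aY bY Ty x))) *
        ((1 - 2 * x) + x * (1 - x) * ((aY + bY) / Ty) * (1 - 2 * qreY aY bY Ty x))) x := by
  have hy := hasDerivAt_qreY aY bY Ty x
  have hD := (hy.mul (hy.const_sub 1)).const_mul ((aY + bY) / Ty)
  have hp := (hasDerivAt_id' x).mul ((hasDerivAt_id' x).const_sub 1)
  have hg := hasDerivAt_log_one_div_sub_one hx
  rw [funext (qreL_eq aY bY Ty)]
  refine (hy.add ((hp.mul hg).mul hD)).congr_deriv ?_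
  have : x * (1 - x) ≠ 0 := mul_ne_zero hx.1.ne' (by linarith [hx.2])
  simp only [Pi.mul_apply]
  rw [mul_neg (x * (1 - x)), mul_inv_cancel₀ this]
  ring

lemma continuousAt_qreL (hx : x ∈ Ioo 0 1) : ContinuousAt (qreL aY bY Ty) x :=
  (hasDerivAt_qreL hx).continuousAt

lemma qreY_lt_qreL (hc : 0 < aY + bY) (hTy : 0 < Ty) (hx0 : 0 < x) (hx : x < 1 / 2) :
    qreY aY bY Ty x < qreL aY bY Ty x := by
  rw [qreL_eq]
  have := qreY_mul_one_sub_pos aY bY Ty x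
  have := log_one_div_sub_one_pos hx0 hx
  have : 0 < 1 - x := by linarith
  apply lt_add_of_pos_right
  positivity

lemma tendsto_qreL_nhdsGT_zero (aY bY Ty : ℝ) :
    Tendsto (qreL aY bY Ty) (𝓝[>] 0) (𝓝 (qreY aY bY Ty 0)) := by
  have hcont := continuous_qreY aY bY Ty
  have hy := hcont.continuousAt (x := 0)
  have hD : ContinuousAt
      (fun x => (aY + bY) / Ty * (qreY aY bY Ty x * (1 - qreY aY bY Ty x))) 0 := by
    fun_prop
  have h := (hy.tendsto.mono_left nhdsWithin_le_nhds).add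
    (tendsto_mul_one_sub_mul_log_one_div_sub_one.mul (hD.tendsto.mono_left nhdsWithin_le_nhds))
  rw [zero_mul, add_zero] at h
  exact h.congr fun x => (qreL_eq aY bY Ty x).symm

lemma strictMonoOn_qreL (hc : 0 < aY + bY) (hTy : 0 < Ty) (hx₁ : x₁ < 1 / 2)
    (hy : qreY aY bY Ty x₁ ≤ 1 / 2) : StrictMonoOn (qreL aY bY Ty) (Ioc 0 x₁) := by
  refine strictMonoOn_of_deriv_pos (convex_Ioc 0 x₁)
    (fun z hz => (continuousAt_qreL ⟨hz.1, by linarith [hz.2]⟩).continuousWithinAt) ?_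
  intro z hz
  rw [interior_Ioc] at hz
  rw [(hasDerivAt_qreL ⟨hz.1, by linarith [hz.2]⟩).deriv]
  have hyz : qreY aY bY Ty z ≤ 1 / 2 := ((qreY_strictMono hc hTy).monotone hz.2.le).trans hy
  have := qreY_mul_one_sub_pos aY bY Ty z
  have := log_one_div_sub_one_pos hz.1 (hz.2.trans hx₁)
  have : 0 < 1 - z := by linarith [hz.2]
  have : 0 ≤ z * (1 - z) * ((aY + bY) / Ty) * (1 - 2 * qreY aY bY Ty z) := by
    have : 0 ≤ 1 - 2 * qreY aY bY Ty z := by linarith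
    have : 0 < (aY + bY) / Ty := div_pos hc hTy
    have := hz.1
    positivity
  have : 0 < 1 - 2 * z := by linarith [hz.2]
  positivity

lemma exists_qreL_eq_qreY (hc : 0 < aY + bY) (hTy : 0 < Ty) (hx₁0 : 0 < x₁) (hx₁ : x₁ < 1 / 2) :
    ∃ xL ∈ Ioo 0 x₁, qreL aY bY Ty xL = qreY aY bY Ty x₁ := by
  have hnear : ∀ᶠ x in 𝓝[>] 0, qreL aY bY Ty x < qreY aY bY Ty x₁ ∧ x ∈ Ioo 0 x₁ :=
    ((tendsto_qreL_nhdsGT_zero aY bY Ty).eventually_lt_const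
      (qreY_strictMono hc hTy hx₁0)).and (Ioo_mem_nhdsGT hx₁0)
  obtain ⟨a, hLa, ha⟩ := hnear.exists
  have hcont : ContinuousOn (qreL aY bY Ty) (Icc a x₁) := fun z hz =>
    (continuousAt_qreL ⟨ha.1.trans_le hz.1, by linarith [hz.2]⟩).continuousWithinAt
  obtain ⟨xL, hxL, hLxL⟩ := intermediate_value_Ioo ha.2.le hcont
    ⟨hLa, qreY_lt_qreL hc hTy hx₁0 hx₁⟩
  exact ⟨xL, ⟨ha.1.trans hxL.1, hxL.2⟩, hLxL⟩

lemma qreL_lt_qreY_of_mem_Ioo (hc : 0 < aY + bY) (hTy : 0 < Ty) (hx₁ : x₁ < 1 / 2)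
    (hy : qreY aY bY Ty x₁ ≤ 1 / 2) (hxL : xL ∈ Ioo 0 x₁)
    (hLxL : qreL aY bY Ty xL = qreY aY bY Ty x₁) {z : ℝ} (hz : z ∈ Ioo 0 xL) :
    qreL aY bY Ty z < qreY aY bY Ty x₁ :=
  hLxL ▸ strictMonoOn_qreL hc hTy hx₁ hy ⟨hz.1, (hz.2.trans hxL.2).le⟩ ⟨hxL.1, hxL.2.le⟩ hz.2

lemma qreY_lt_qreL_of_mem_Ioo (hc : 0 < aY + bY) (hTy : 0 < Ty) (hx₁ : x₁ < 1 / 2)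
    (hy : qreY aY bY Ty x₁ ≤ 1 / 2) (hxL : xL ∈ Ioo 0 x₁)
    (hLxL : qreL aY bY Ty xL = qreY aY bY Ty x₁) {z : ℝ} (hz : z ∈ Ioo xL (1 / 2)) :
    qreY aY bY Ty x₁ < qreL aY bY Ty z := by
  rcases le_or_gt z x₁ with h | h
  · exact hLxL ▸ strictMonoOn_qreL hc hTy hx₁ hy ⟨hxL.1, hxL.2.le⟩ ⟨hxL.1.trans hz.1, h⟩ hz.1
  · exact (qreY_strictMono hc hTy h).trans (qreY_lt_qreL hc hTy (hxL.1.trans hz.1) hz.2)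

end QreL

section QreTX

variable {aX bX aY bY Ty x xL : ℝ}

lemma hasDerivAt_qreTX (hx : x ∈ Ioo 0 (1 / 2)) :
    HasDerivAt (qreTX aX bX aY bY Ty)
      ((bX - (aX + bX) * qreL aY bY Ty x) / (x * (1 - x) * log (1 / x - 1) ^ 2)) x := by
  have hg := log_one_div_sub_one_pos hx.1 hx.2
  have hN := ((hasDerivAt_qreY aY bY Ty x).const_mul (aX + bX)).const_sub bX
  refine (hN.div (hasDerivAt_log_one_div_sub_one ⟨hx.1, by linarith [hx.2]⟩) hg.ne').congr_deriv ?_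
  have : x ≠ 0 := hx.1.ne'
  have : 1 - x ≠ 0 := by linarith [hx.2]
  rw [qreL_eq]
  field_simp
  ring

lemma isMaxOn_qreTX (habX : 0 < aX + bX) (hxL : xL ∈ Ioo 0 (1 / 2))
    (hlt : ∀ z ∈ Ioo 0 xL, qreL aY bY Ty z < bX / (aX + bX))
    (hgt : ∀ z ∈ Ioo xL (1 / 2), bX / (aX + bX) < qreL aY bY Ty z) :
    IsMaxOn (qreTX aX bX aY bY Ty) (Ioo 0 (1 / 2)) xL := by
  have hderiv {z : ℝ} (hz : z ∈ Ioo 0 (1 / 2)) :=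
    hasDerivAt_qreTX (aX := aX) (bX := bX) (aY := aY) (bY := bY) (Ty := Ty) hz
  have hden {z : ℝ} (hz : z ∈ Ioo 0 (1 / 2)) : 0 < z * (1 - z) * log (1 / z - 1) ^ 2 := by
    have := log_one_div_sub_one_pos hz.1 hz.2
    have : 0 < 1 - z := by linarith [hz.2]
    have := hz.1
    positivity
  refine isMaxOn_Ioo_of_deriv (hderiv hxL).continuousAt
    (fun z hz => (hderiv ⟨hz.1, hz.2.trans hxL.2⟩).differentiableAt.differentiableWithinAt)
    (fun z hz => (hderiv ⟨hxL.1.trans hz.1, hz.2⟩).differentiableAt.differentiableWithinAt)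
    (fun z hz => ?_) (fun z hz => ?_)
  · have hz' : z ∈ Ioo 0 (1 / 2) := ⟨hz.1, hz.2.trans hxL.2⟩
    rw [(hderiv hz').deriv]
    have := (lt_div_iff₀ habX).1 (hlt z hz)
    exact div_nonneg (by linarith) (hden hz').le
  · have hz' : z ∈ Ioo 0 (1 / 2) := ⟨hxL.1.trans hz.1, hz.2⟩
    rw [(hderiv hz').deriv]
    have := (div_lt_iff₀ habX).1 (hgt z hz)
    exact div_nonpos_of_nonpos_of_nonneg (by linarith) (hden hz').le

end QreTX

theorem stmt_9 (aX bX aY bY Ty : ℝ) (hTy : 0 < Ty)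
    (hab : aX > bX) (hbX : bX > 0) (hY : aY + bY > 0)
    (hlo : max 0 ((bY - aY) / (2 * Real.log (aX / bX))) < Ty)
    (hhi : Ty < bY / Real.log (aX / bX)) :
    ∃ xL ∈ Set.Ioo (0:ℝ) (min (1/2 : ℝ) ((bY - Ty * Real.log (aX / bX)) / (aY + bY))),
      qreL aY bY Ty xL = bX / (aX + bX) ∧
      (∀ x ∈ Set.Ioo (0:ℝ) (min (1/2 : ℝ) ((bY - Ty * Real.log (aX / bX)) / (aY + bY))),
        qreL aY bY Ty x = bX / (aX + bX) → x = xL) ∧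
      ∀ x ∈ Set.Ioo (0:ℝ) (1/2), qreTX aX bX aY bY Ty x ≤ qreTX aX bX aY bY Ty xL := by
  have habX : 0 < aX + bX := by linarith
  have hk : 0 < log (aX / bX) := log_pos ((one_lt_div hbX).2 hab)
  have hy₁ : qreY aY bY Ty ((bY - Ty * log (aX / bX)) / (aY + bY)) = bX / (aX + bX) := by
    rw [qreY_sub_mul_div hY.ne' hTy.ne', exp_log (div_pos (hbX.trans hab) hbX), one_add_div hbX.ne',
      inv_div, add_comm]
  set x₁ := (bY - Ty * log (aX / bX)) / (aY + bY)
  have hx₁0 : 0 < x₁ := div_pos (by linarith [(lt_div_iff₀ hk).1 hhi]) hY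
  have hx₁ : x₁ < 1 / 2 := by
    have := (div_lt_iff₀ (by positivity)).1 ((le_max_right _ _).trans_lt hlo)
    rw [div_lt_iff₀ hY]
    linarith
  have hy₁half : qreY aY bY Ty x₁ ≤ 1 / 2 := by
    rw [hy₁, div_le_iff₀ habX]
    linarith
  rw [min_eq_right hx₁.le, ← hy₁]
  obtain ⟨xL, hxL, hLxL⟩ := exists_qreL_eq_qreY hY hTy hx₁0 hx₁
  refine ⟨xL, hxL, hLxL, fun x hx hLx => ?_, fun x hx => ?_⟩
  · exact (strictMonoOn_qreL hY hTy hx₁ hy₁half).injOn ⟨hx.1, hx.2.le⟩ ⟨hxL.1, hxL.2.le⟩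
      (hLx.trans hLxL.symm)
  · refine isMaxOn_qreTX habX ⟨hxL.1, hxL.2.trans hx₁⟩ (fun z hz => ?_) (fun z hz => ?_) hx
    · exact hy₁ ▸ qreL_lt_qreY_of_mem_Ioo hY hTy hx₁ hy₁half hxL hLxL hz
    · exact hy₁ ▸ qreY_lt_qreL_of_mem_Ioo hY hTy hx₁ hy₁half hxL hLxL hz
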